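/- Let (A_m)_{m≥0} be a formal orbit portrait of valence N ≥ 2 with degrees (d_m)_{m≥1}, let m ≥ 0, and let (a,b) be a complementary arc of A_m of length ℓ. Then d_{m+1}·a ≠ d_{m+1}·b (so d_{m+1}·ℓ is not an integer), the open arc (d_{m+1}·a, d_{m+1}·b) is a complementary arc of A_{m+1}, and its length equals d_{m+1}ℓ − ⌊d_{m+1}ℓ⌋. -/

import Mathlib

/-- The unique representative in `[0,1)` of `b - a`; for `a ≠ b` this is the
unique representative of `b − a` in `(0,1)`, the length `ℓ(a,b)` of the arc from `a` to `b`. -/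
noncomputable def arcLen (a b : UnitAddCircle) : ℝ :=
  ((AddCircle.equivIco 1 0) (b - a) : ℝ)

/-- The open arc `(a,b) = {a + t : 0 < t < ℓ(a,b)}` in `ℝ/ℤ`. -/
def openArc (a b : UnitAddCircle) : Set UnitAddCircle :=
  {x | ∃ t : ℝ, 0 < t ∧ t < arcLen a b ∧ x = a + (t : UnitAddCircle)}

/-- `(a,b,c)` is in positive cyclic order: `ℓ(a,b) < ℓ(a,c)`. -/
def PosCyclic (a b c : UnitAddCircle) : Prop := arcLen a b < arcLen a c

/-- A formal orbit portrait of valence `N` with degrees `d`: a sequence of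
`N`-element subsets `A m` of `ℝ/ℤ` such that `θ ↦ d_{m+1}·θ` maps `A m`
bijectively onto `A (m+1)` and carries every triple of pairwise distinct points
of `A m` in positive cyclic order to a triple in positive cyclic order. -/
def IsFormalPortrait (N : ℕ) (d : ℕ → ℕ) (A : ℕ → Set UnitAddCircle) : Prop :=
  ∀ m : ℕ,
    (A m).Finite ∧ (A m).ncard = N ∧
    Set.BijOn (fun θ => d (m + 1) • θ) (A m) (A (m + 1)) ∧
    ∀ a ∈ A m, ∀ b ∈ A m, ∀ c ∈ A m, a ≠ b → a ≠ c → b ≠ c →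
      PosCyclic a b c →
        PosCyclic (d (m + 1) • a) (d (m + 1) • b) (d (m + 1) • c)

/-- `(a,b)` is a complementary arc of `A`: `a, b ∈ A`, `a ≠ b`, and the open
arc `(a,b)` contains no point of `A`. -/
def IsComplArc (A : Set UnitAddCircle) (a b : UnitAddCircle) : Prop :=
  a ≠ b ∧ a ∈ A ∧ b ∈ A ∧ openArc a b ∩ A = ∅

/-!
Multiplication by `d` multiplies arc lengths by `d` modulo `1`, so the length formula is
immediate. The image arc is complementary because the map `A m → A (m+1)` is a bijection
preserving cyclic order: a point of `A (m+1)` inside the image arc is the image of a point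
`c` of `A m`, which lies beyond `b` as seen from `a`; order preservation puts its image
beyond the image of `b`, i.e. outside the image arc.
-/

namespace UnitAddCircle

lemma arcLen_eq_fract {a b : UnitAddCircle} {r : ℝ} (h : b - a = (r : UnitAddCircle)) :
    arcLen a b = Int.fract r := by
  rw [arcLen, h]
  exact (AddCircle.coe_equivIco_mk_apply (p := (1 : ℝ)) r).trans (by rw [div_one, mul_one])

lemma arcLen_self (a : UnitAddCircle) : arcLen a a = 0 := by
  simpa using arcLen_eq_fract (a := a) (b := a) (r := 0) (by simp)

lemma arcLen_add_coe (a : UnitAddCircle) {t : ℝ} (ht : t ∈ Set.Ico (0 : ℝ) 1) :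
    arcLen a (a + (t : UnitAddCircle)) = t := by
  rw [arcLen_eq_fract (add_sub_cancel_left a _), Int.fract_eq_self.mpr ht]

lemma coe_arcLen (a b : UnitAddCircle) : ((arcLen a b : ℝ) : UnitAddCircle) = b - a :=
  AddCircle.coe_equivIco

lemma arcLen_nonneg (a b : UnitAddCircle) : 0 ≤ arcLen a b :=
  ((AddCircle.equivIco 1 0) (b - a)).2.1

lemma arcLen_lt_one (a b : UnitAddCircle) : arcLen a b < 1 :=
  ((AddCircle.equivIco 1 0) (b - a)).2.2.trans_eq (zero_add 1)

lemma eq_add_arcLen (a b : UnitAddCircle) : b = a + ((arcLen a b : ℝ) : UnitAddCircle) := by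
  rw [coe_arcLen, add_sub_cancel]

lemma arcLen_injective (a : UnitAddCircle) : Function.Injective (arcLen a) := fun b c h => by
  rw [eq_add_arcLen a b, eq_add_arcLen a c, h]

lemma arcLen_pos_iff {a b : UnitAddCircle} : 0 < arcLen a b ↔ a ≠ b := by
  rw [(arcLen_nonneg a b).lt_iff_ne', ← arcLen_self a, (arcLen_injective a).ne_iff, ne_comm]

lemma arcLen_nsmul (n : ℕ) (a b : UnitAddCircle) :
    arcLen (n • a) (n • b) = Int.fract (n * arcLen a b) := by
  apply arcLen_eq_fract
  rw [← smul_sub, ← coe_arcLen, ← AddCircle.coe_nsmul, nsmul_eq_mul]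

lemma mem_openArc_iff {a b x : UnitAddCircle} :
    x ∈ openArc a b ↔ 0 < arcLen a x ∧ arcLen a x < arcLen a b := by
  constructor
  · rintro ⟨t, ht0, htb, rfl⟩
    rwa [arcLen_add_coe a ⟨ht0.le, htb.trans (arcLen_lt_one a b)⟩, and_iff_right ht0]
  · rintro ⟨hx0, hxb⟩
    exact ⟨arcLen a x, hx0, hxb, eq_add_arcLen a x⟩

end UnitAddCircle

open UnitAddCircle

lemma IsComplArc.image {A B : Set UnitAddCircle} {f : UnitAddCircle → UnitAddCircle}
    (hf : Set.BijOn f A B)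
    (hord : ∀ a ∈ A, ∀ b ∈ A, ∀ c ∈ A, a ≠ b → a ≠ c → b ≠ c →
      PosCyclic a b c → PosCyclic (f a) (f b) (f c))
    {a b : UnitAddCircle} (hab : IsComplArc A a b) : IsComplArc B (f a) (f b) := by
  obtain ⟨hne, haA, hbA, hempty⟩ := hab
  refine ⟨fun h => hne (hf.injOn haA hbA h), hf.mapsTo haA, hf.mapsTo hbA,
    Set.eq_empty_of_forall_notMem ?_⟩
  rintro _ ⟨hcArc, hcB⟩
  obtain ⟨c, hcA, rfl⟩ := hf.surjOn hcB
  obtain ⟨hc0, hcb⟩ := mem_openArc_iff.mp hcArc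
  have hca : a ≠ c := fun h => arcLen_pos_iff.mp hc0 (congrArg f h)
  have hbc : b ≠ c := fun h => by simp [h] at hcb
  have hbeyond : arcLen a b < arcLen a c := by
    refine lt_of_le_of_ne (not_lt.mp fun hlt => ?_) fun h => hbc (arcLen_injective a h)
    exact Set.eq_empty_iff_forall_notMem.mp hempty c
      ⟨mem_openArc_iff.mpr ⟨arcLen_pos_iff.mpr hca, hlt⟩, hcA⟩
  exact (hord a haA b hbA c hcA hne hca hbc hbeyond).not_gt hcb

theorem complArc_image_general (N : ℕ) (d : ℕ → ℕ)
    (A : ℕ → Set UnitAddCircle) (hA : IsFormalPortrait N d A) (m : ℕ)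
    (a b : UnitAddCircle) (hab : IsComplArc (A m) a b) :
    d (m + 1) • a ≠ d (m + 1) • b ∧
    IsComplArc (A (m + 1)) (d (m + 1) • a) (d (m + 1) • b) ∧
    arcLen (d (m + 1) • a) (d (m + 1) • b) =
      (d (m + 1) : ℝ) * arcLen a b - ⌊(d (m + 1) : ℝ) * arcLen a b⌋₊ := by
  obtain ⟨-, -, hbij, hord⟩ := hA m
  have himage := hab.image hbij hord
  refine ⟨himage.1, himage, ?_⟩
  have hlen_nonneg : 0 ≤ (d (m + 1) : ℝ) * arcLen a b :=
    mul_nonneg (Nat.cast_nonneg _) (arcLen_nonneg a b)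
  rw [arcLen_nsmul, natCast_floor_eq_intCast_floor hlen_nonneg, Int.self_sub_floor]

/-- The endpoints of a complementary arc of `A m` map to distinct points, the
image arc is a complementary arc of `A (m+1)`, and its length is
`d_{m+1}ℓ − ⌊d_{m+1}ℓ⌋`. -/
theorem complArc_image (N : ℕ) (hN : 2 ≤ N) (d : ℕ → ℕ) (hd : ∀ m, 1 ≤ m → 2 ≤ d m)
    (A : ℕ → Set UnitAddCircle) (hA : IsFormalPortrait N d A) (m : ℕ)
    (a b : UnitAddCircle) (hab : IsComplArc (A m) a b) :
    d (m + 1) • a ≠ d (m + 1) • b ∧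
    IsComplArc (A (m + 1)) (d (m + 1) • a) (d (m + 1) • b) ∧
    arcLen (d (m + 1) • a) (d (m + 1) • b) =
      (d (m + 1) : ℝ) * arcLen a b - ⌊(d (m + 1) : ℝ) * arcLen a b⌋₊ :=
  complArc_image_general N d A hA m a b hab
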